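/- arXiv:2604.08271 — 3 statements merged into one kernel-verified Lean document; each statement's English description precedes it below -/
import Mathlib

section
/- Let K ≥ 3, let μ_1, …, μ_K in ℝ^d form a normalized simplex equiangular tight frame, and fix a forget class k ∈ {1,…,K}. Suppose the unlearned classifier weights satisfy w_k = −(1−γ) μ_k and w_c = α μ_c + β μ_k for every c ≠ k, where 0 < α < 1, 0 < β < 1, 0 < γ < 1. Then the cosine similarity of w_k with μ_k equals −1, while for every c ≠ k the cosine similarity of w_c with μ_k is strictly greater than −1. Consequently, any index c maximizing the cosine similarity of w_c with μ_k over c ∈ {1,…,K} is different from k; that is, the unlearned model achieves zero forget accuracy on class k. -/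
/-!
Writing `ρ = ⟪μ_c, μ_k⟫ = -1/(K-1)`, the weight `w_c = α μ_c + β μ_k` satisfies
`‖w_c‖² - ⟪w_c, μ_k⟫² = α² (1 - ρ²) > 0` since `α ≠ 0` and `|ρ| < 1` once `K ≥ 3`; so
Cauchy–Schwarz is strict for `w_c` and `μ_k` and their cosine similarity exceeds `-1`.
On the other hand `w_k` is a negative multiple of `μ_k`, so its cosine similarity is exactly `-1`,
and `k` can never be a maximizer since some class `c ≠ k` exists.
-/

open RealInnerProductSpace

section CosineSimilarity

variable {F : Type*} [NormedAddCommGroup F] [InnerProductSpace ℝ F]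

theorem real_inner_div_norm_mul_norm_smul_left_eq_neg_one {x : F} {r : ℝ} (hx : x ≠ 0)
    (hr : r < 0) : ⟪r • x, x⟫ / (‖r • x‖ * ‖x‖) = -1 := by
  rw [real_inner_comm, mul_comm]
  exact real_inner_div_norm_mul_norm_eq_neg_one_of_ne_zero_of_neg_mul hx hr

theorem neg_one_lt_real_inner_div_norm_mul_norm_of_sq_lt {x y : F}
    (h : ⟪x, y⟫ ^ 2 < (‖x‖ * ‖y‖) ^ 2) : -1 < ⟪x, y⟫ / (‖x‖ * ‖y‖) := by
  have hnn : 0 ≤ ‖x‖ * ‖y‖ := by positivity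
  have habs : |⟪x, y⟫| < ‖x‖ * ‖y‖ := abs_lt_of_sq_lt_sq h hnn
  have hpos : 0 < ‖x‖ * ‖y‖ := (abs_nonneg _).trans_lt habs
  rw [lt_div_iff₀ hpos, neg_one_mul]
  exact (abs_lt.mp habs).1

theorem norm_smul_add_smul_sq_eq {u v : F} (hu : ‖u‖ = 1) (hv : ‖v‖ = 1) (α β : ℝ) :
    ‖α • u + β • v‖ ^ 2 = ⟪α • u + β • v, v⟫ ^ 2 + α ^ 2 * (1 - ⟪u, v⟫ ^ 2) := by
  rw [norm_add_sq_real, norm_smul, norm_smul, inner_add_left, real_inner_smul_left,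
    real_inner_smul_left, real_inner_smul_left, real_inner_smul_right, hu, hv,
    real_inner_self_eq_norm_sq, hv, Real.norm_eq_abs, Real.norm_eq_abs]
  ring_nf
  rw [sq_abs, sq_abs]
  ring

theorem neg_one_lt_real_inner_div_norm_mul_norm_smul_add_smul {u v : F} (hu : ‖u‖ = 1)
    (hv : ‖v‖ = 1) (huv : |⟪u, v⟫| < 1) {α : ℝ} (hα : α ≠ 0) (β : ℝ) :
    -1 < ⟪α • u + β • v, v⟫ / (‖α • u + β • v‖ * ‖v‖) := by
  apply neg_one_lt_real_inner_div_norm_mul_norm_of_sq_lt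
  have hgap : 0 < α ^ 2 * (1 - ⟪u, v⟫ ^ 2) := by
    have : ⟪u, v⟫ ^ 2 < 1 := by simpa using sq_lt_one_iff_abs_lt_one _ |>.mpr huv
    have : 0 < α ^ 2 := by positivity
    nlinarith
  rw [hv, mul_one, norm_smul_add_smul_sq_eq hu hv]
  linarith

end CosineSimilarity

theorem abs_neg_one_div_sub_one_lt_one {K : ℕ} (hK : 3 ≤ K) : |-1 / ((K : ℝ) - 1)| < 1 := by
  have hK' : (3 : ℝ) ≤ K := by exact_mod_cast hK
  rw [abs_div, abs_neg, abs_one, abs_of_pos (by linarith), div_lt_one (by linarith)]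
  linarith

theorem zero_forget_accuracy_general {d K : ℕ} (hK : 3 ≤ K)
    (μ : Fin K → EuclideanSpace ℝ (Fin d))
    (hnorm : ∀ j, ‖μ j‖ = 1)
    (hangle : ∀ i j, i ≠ j → ⟪μ i, μ j⟫ = -1 / ((K : ℝ) - 1))
    (k : Fin K) (w : Fin K → EuclideanSpace ℝ (Fin d))
    (α β γ : ℝ) (hα : 0 < α ∧ α < 1) (hγ : 0 < γ ∧ γ < 1)
    (hwk : w k = (-(1 - γ)) • μ k)
    (hwc : ∀ c, c ≠ k → w c = α • μ c + β • μ k) :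
    ⟪w k, μ k⟫ / (‖w k‖ * ‖μ k‖) = -1 ∧
    (∀ c, c ≠ k → -1 < ⟪w c, μ k⟫ / (‖w c‖ * ‖μ k‖)) ∧
    (∀ c : Fin K,
      (∀ c' : Fin K, ⟪w c', μ k⟫ / (‖w c'‖ * ‖μ k‖)
          ≤ ⟪w c, μ k⟫ / (‖w c‖ * ‖μ k‖)) → c ≠ k) := by
  have hforget : ⟪w k, μ k⟫ / (‖w k‖ * ‖μ k‖) = -1 := by
    rw [hwk]
    exact real_inner_div_norm_mul_norm_smul_left_eq_neg_one
      (norm_ne_zero_iff.mp (by simp [hnorm])) (by linarith [hγ.2])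
  have hretain : ∀ c, c ≠ k → -1 < ⟪w c, μ k⟫ / (‖w c‖ * ‖μ k‖) := fun c hc => by
    rw [hwc c hc]
    exact neg_one_lt_real_inner_div_norm_mul_norm_smul_add_smul (hnorm c) (hnorm k)
      (hangle c k hc ▸ abs_neg_one_div_sub_one_lt_one hK) hα.1.ne' β
  refine ⟨hforget, hretain, fun c hmax hck => ?_⟩
  have : Nontrivial (Fin K) := Fin.nontrivial_iff_two_le.mpr (by omega)
  obtain ⟨c', hc'⟩ := exists_ne k
  have := hmax c'
  rw [hck, hforget] at this
  exact (hretain c' hc').not_ge this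

/-- Zero forget accuracy from the unlearned configuration: with a normalized
simplex ETF `μ_1, …, μ_K` (`K ≥ 3`), forget class `k`, and unlearned weights
`w_k = −(1−γ) μ_k`, `w_c = α μ_c + β μ_k` for `c ≠ k` (`0 < α, β, γ < 1`),
the cosine similarity of `w_k` with `μ_k` is `−1`, that of every `w_c`
(`c ≠ k`) with `μ_k` exceeds `−1`, and hence every maximizer of the cosine
similarity with `μ_k` differs from `k`. -/
theorem zero_forget_accuracy {d K : ℕ} (hK : 3 ≤ K)
    (μ : Fin K → EuclideanSpace ℝ (Fin d))
    (hnorm : ∀ j, ‖μ j‖ = 1)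
    (hangle : ∀ i j, i ≠ j → ⟪μ i, μ j⟫ = -1 / ((K : ℝ) - 1))
    (k : Fin K) (w : Fin K → EuclideanSpace ℝ (Fin d))
    (α β γ : ℝ) (hα : 0 < α ∧ α < 1) (hβ : 0 < β ∧ β < 1) (hγ : 0 < γ ∧ γ < 1)
    (hwk : w k = (-(1 - γ)) • μ k)
    (hwc : ∀ c, c ≠ k → w c = α • μ c + β • μ k) :
    ⟪w k, μ k⟫ / (‖w k‖ * ‖μ k‖) = -1 ∧
    (∀ c, c ≠ k → -1 < ⟪w c, μ k⟫ / (‖w c‖ * ‖μ k‖)) ∧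
    (∀ c : Fin K,
      (∀ c' : Fin K, ⟪w c', μ k⟫ / (‖w c'‖ * ‖μ k‖)
          ≤ ⟪w c, μ k⟫ / (‖w c‖ * ‖μ k‖)) → c ≠ k) :=
  zero_forget_accuracy_general hK μ hnorm hangle k w α β γ hα hγ hwk hwc
end

section
/- Let K ≥ 3, let z ∈ ℝ^K, let i ≠ k be two indices in {1,…,K}, let λ₁ > 0, and set S = Σ_{l=1}^K exp(z_l). If the stationarity conditions exp(z_j)/S + λ₁ z_j = 0 hold for every index j with j ≠ i and j ≠ k, then z_j = z_l for all indices j, l with j, l ∉ {i, k}. -/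
theorem Real.strictMono_exp_div_add_mul {c lam : ℝ} (hc : 0 < c) (hlam : 0 < lam) :
    StrictMono fun x => Real.exp x / c + lam * x :=
  (Real.exp_strictMono.div_const hc).add (strictMono_mul_left_of_pos hlam)

theorem kkt_z_coords_eq_general {K : ℕ} (z : Fin K → ℝ)
    (i k : Fin K) (lam₁ : ℝ) (hlam : 0 < lam₁)
    (hstat : ∀ j, j ≠ i → j ≠ k →
      Real.exp (z j) / (∑ l, Real.exp (z l)) + lam₁ * z j = 0) :
    ∀ j l, j ≠ i → j ≠ k → l ≠ i → l ≠ k → z j = z l := by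
  intro j l hji hjk hli hlk
  have hS : 0 < ∑ m, Real.exp (z m) :=
    Finset.sum_pos (fun m _ => Real.exp_pos _) ⟨i, Finset.mem_univ i⟩
  exact (Real.strictMono_exp_div_add_mul hS hlam).injective
    ((hstat j hji hjk).trans (hstat l hli hlk).symm)

/-- KKT lemma, `z`-part: if `K ≥ 3`, `i ≠ k`, `λ₁ > 0`, and the stationarity
conditions `exp(z_j)/S + λ₁ z_j = 0` hold for every `j ∉ {i, k}`, where
`S = ∑_l exp(z_l)`, then all coordinates `z_j` with `j ∉ {i, k}` are equal. -/
theorem kkt_z_coords_eq {K : ℕ} (hK : 3 ≤ K) (z : Fin K → ℝ)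
    (i k : Fin K) (hik : i ≠ k) (lam₁ : ℝ) (hlam : 0 < lam₁)
    (hstat : ∀ j, j ≠ i → j ≠ k →
      Real.exp (z j) / (∑ l, Real.exp (z l)) + lam₁ * z j = 0) :
    ∀ j l, j ≠ i → j ≠ k → l ≠ i → l ≠ k → z j = z l :=
  kkt_z_coords_eq_general z i k lam₁ hlam hstat
end

section
/- Let K ≥ 2, let z' ∈ ℝ^K, let k be an index in {1,…,K}, let λ₂ < 0, and set S' = Σ_{l=1}^K exp(z'_l). If the stationarity conditions −exp(z'_j)/S' + λ₂ z'_j = 0 hold for every index j ≠ k, then z'_j = z'_l for all indices j, l with j ≠ k and l ≠ k. -/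
/-!
Clearing the denominator, each stationarity condition says `exp (z' j) = c * z' j` with the same
slope `c = λ₂ S' ≤ 0` for every `j ≠ k`. Since `x ↦ exp x - c x` is strictly increasing when
`c ≤ 0`, this equation has at most one solution, so all those coordinates coincide.
-/

open Real

theorem Real.strictMono_exp_sub_mul {c : ℝ} (hc : c ≤ 0) :
    StrictMono fun x => exp x - c * x := by
  have hlin : Monotone fun x : ℝ => -c * x := fun _ _ h =>
    mul_le_mul_of_nonneg_left h (neg_nonneg.mpr hc)
  simpa only [neg_mul, ← sub_eq_add_neg] using exp_strictMono.add_monotone hlin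

theorem Real.eq_of_exp_eq_mul_of_nonpos {c x y : ℝ} (hc : c ≤ 0)
    (hx : exp x = c * x) (hy : exp y = c * y) : x = y :=
  (strictMono_exp_sub_mul hc).injective <| by simp only [hx, hy, sub_self]

theorem kkt_z'_coords_eq_general {K : ℕ} (z' : Fin K → ℝ)
    (k : Fin K) (lam₂ : ℝ) (hlam : lam₂ < 0)
    (hstat : ∀ j, j ≠ k →
      -(Real.exp (z' j) / (∑ l, Real.exp (z' l))) + lam₂ * z' j = 0) :
    ∀ j l, j ≠ k → l ≠ k → z' j = z' l := by
  intro j l hj hl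
  set S := ∑ l, exp (z' l)
  have hS : 0 < S := Finset.sum_pos (fun i _ => exp_pos (z' i)) ⟨k, Finset.mem_univ k⟩
  have hsol : ∀ i, i ≠ k → exp (z' i) = lam₂ * S * z' i := fun i hi => by
    have h := hstat i hi
    field_simp at h
    linarith
  exact eq_of_exp_eq_mul_of_nonpos (mul_nonpos_of_nonpos_of_nonneg hlam.le hS.le)
    (hsol j hj) (hsol l hl)

/-- KKT lemma, `z'`-part: if `K ≥ 2`, `λ₂ < 0`, and the stationarity conditions
`−exp(z'_j)/S' + λ₂ z'_j = 0` hold for every `j ≠ k`, where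
`S' = ∑_l exp(z'_l)`, then all coordinates `z'_j` with `j ≠ k` are equal. -/
theorem kkt_z'_coords_eq {K : ℕ} (hK : 2 ≤ K) (z' : Fin K → ℝ)
    (k : Fin K) (lam₂ : ℝ) (hlam : lam₂ < 0)
    (hstat : ∀ j, j ≠ k →
      -(Real.exp (z' j) / (∑ l, Real.exp (z' l))) + lam₂ * z' j = 0) :
    ∀ j l, j ≠ k → l ≠ k → z' j = z' l :=
  kkt_z'_coords_eq_general z' k lam₂ hlam hstat
end
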